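/- arXiv:0805.3518 — 4 statements merged into one kernel-verified Lean document; each statement's English description precedes it below -/
import Mathlib

section
/- For any SOLP program P, FP(A(P̂)) = AFP(P): the classical fixpoints of the traditional program obtained from P by first rewriting tolerance rules (the hat operator) and then removing all social conditions coincide exactly with the autonomous fixpoints of P. -/
namespace SOLP

/-- Literals: an atom or its negation-as-failure (NAF). -/
inductive Lit (α : Type) where
  | pos (a : α)
  | neg (a : α)

/-- The atom of a literal. -/
def Lit.atom {α : Type} : Lit α → α
  | .pos a => a
  | .neg a => a

/-- Classical truth of a literal w.r.t. an interpretation. -/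
def Lit.holds {α : Type} (I : Set α) : Lit α → Prop
  | .pos a => a ∈ I
  | .neg a => a ∉ I

/-- Renaming of literals. -/
def Lit.map {α β : Type} (f : α → β) : Lit α → Lit β
  | .pos a => .pos (f a)
  | .neg a => .neg (f a)

/-- Selection condition of a social condition: either a member selection `[P_k]`
naming one program, or a cardinal selection `[l,h]`. -/
inductive Cond (n : ℕ) where
  | member (k : Fin n)
  | card (l h : ℕ)

/-- Social conditions (SCs): a selection condition, a content (set of literals)
and a skeleton (set of nested SCs). -/
inductive SC (α : Type) (n : ℕ) where
  | mk (cond : Cond n) (content : List (Lit α)) (skel : List (SC α n))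

/-- Occurrence of an atom in a social condition. -/
inductive SC.HasAtom {α : Type} {n : ℕ} (a : α) : SC α n → Prop where
  | content {c : Cond n} {cont : List (Lit α)} {skel : List (SC α n)} {b : Lit α}
      (hb : b ∈ cont) (h : b.atom = a) : SC.HasAtom a (.mk c cont skel)
  | skel {c : Cond n} {cont : List (Lit α)} {skel : List (SC α n)} {s' : SC α n}
      (hs : s' ∈ skel) (h : SC.HasAtom a s') : SC.HasAtom a (.mk c cont skel)

/-- Well-formed social conditions: either simple (empty skeleton), or a cardinal
SC all of whose nested SCs are either well-formed cardinal SCs with `h' ≤ h`, or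
simple member SCs. -/
inductive SC.WF {α : Type} {n : ℕ} : SC α n → Prop where
  | simple (c : Cond n) (content : List (Lit α)) : SC.WF (.mk c content [])
  | card (l h : ℕ) (content : List (Lit α)) (skel : List (SC α n))
      (hshape : ∀ s' ∈ skel,
        (∃ (l' h' : ℕ) (c' : List (Lit α)) (sk' : List (SC α n)),
            s' = SC.mk (.card l' h') c' sk' ∧ h' ≤ h) ∨
        (∃ (k : Fin n) (c' : List (Lit α)), s' = SC.mk (.member k) c' []))
      (hwf : ∀ s' ∈ skel, ∀ (l' h' : ℕ) (c' : List (Lit α)) (sk' : List (SC α n)),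
          s' = SC.mk (.card l' h') c' sk' → SC.WF s') :
      SC.WF (.mk (.card l h) content skel)

/-- A social rule: head atom (marked as a tolerance rule if the real head is
`okay(head)`), a body of literals, and a list of SCs, each marked positive
(`true`) or NAF (`false`). -/
structure SRule (α : Type) (n : ℕ) where
  head : α
  isOkay : Bool
  lits : List (Lit α)
  scs : List (SC α n × Bool)

/-- A SOLP program. -/
abbrev SProgram (α : Type) (n : ℕ) := Set (SRule α n)

/-- `okay(p) ← body` becomes `p ← p, body`; other rules are unchanged. -/
def hatP {α : Type} {n : ℕ} (P : SProgram α n) : SProgram α n :=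
  {r ∈ P | r.isOkay = false} ∪
    (fun r : SRule α n => ⟨r.head, false, .pos r.head :: r.lits, r.scs⟩) ''
      {r ∈ P | r.isOkay = true}

/-- The autonomous reduction: remove all social conditions. -/
def AP {α : Type} {n : ℕ} (P : SProgram α n) : SProgram α n :=
  (fun r : SRule α n => ⟨r.head, r.isOkay, r.lits, []⟩) '' P

/-- The atoms occurring in a SOLP program. -/
def SVar {α : Type} {n : ℕ} (P : SProgram α n) : Set α :=
  {a | ∃ r ∈ P, r.head = a ∨ (∃ b ∈ r.lits, Lit.atom b = a) ∨
        (∃ p ∈ r.scs, SC.HasAtom a p.1)}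

/-- Truth of a list of literals w.r.t. an interpretation. -/
def litsTrue {α : Type} (I : Set α) (L : List (Lit α)) : Prop := ∀ b ∈ L, b.holds I

/-- The autonomous immediate consequence operator `AT_P`. -/
def ATP {α : Type} {n : ℕ} (P : SProgram α n) (I : Set α) : Set α :=
  {a | ∃ r ∈ AP P, r.isOkay = false ∧ r.head = a ∧ litsTrue I r.lits} ∪
  {a | ∃ r ∈ AP P, r.isOkay = true ∧ r.head = a ∧ a ∈ I ∧ litsTrue I r.lits}

/-- Autonomous fixpoints of a SOLP program. -/
def AFP {α : Type} {n : ℕ} (P : SProgram α n) : Set (Set α) :=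
  {I | I ⊆ SVar (AP P) ∧ ATP P I = I}

/-- Social interpretations: sets of labelled atoms `a_{P_i}`. -/
abbrev SInterp (α : Type) (n : ℕ) := Set (Fin n × α)

/-- Truth of a literal for program `p` w.r.t. a social interpretation. -/
def Lit.trueFor {α : Type} {n : ℕ} (I : SInterp α n) (p : Fin n) : Lit α → Prop
  | .pos a => (p, a) ∈ I
  | .neg a => (p, a) ∉ I

/-- Truth of an SC of `P_j` in a sub-collection `C'` w.r.t. a social interpretation. -/
inductive SC.TrueIn {α : Type} {n : ℕ} (I : SInterp α n) (j : Fin n) :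
    Set (Fin n) → SC α n → Prop where
  | member {C' : Set (Fin n)} {k : Fin n} {content : List (Lit α)} {skel : List (SC α n)}
      (hk : k ∈ C') (hc : ∀ b ∈ content, Lit.trueFor I k b) :
      SC.TrueIn I j C' (.mk (.member k) content skel)
  | card {C' : Set (Fin n)} {l h : ℕ} {content : List (Lit α)} {skel : List (SC α n)}
      (D : Finset (Fin n)) (hD : ∀ p ∈ D, p ∈ C' ∧ p ≠ j)
      (hl : l ≤ D.card) (hh : D.card ≤ h)
      (hc : ∀ b ∈ content, ∀ p ∈ D, Lit.trueFor I p b)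
      (D' : ∀ s' ∈ skel, Finset (Fin n))
      (hsub : ∀ (s' : SC α n) (hs' : s' ∈ skel), D' s' hs' ⊆ D)
      (hs : ∀ (s' : SC α n) (hs' : s' ∈ skel), SC.TrueIn I j ↑(D' s' hs') s') :
      SC.TrueIn I j C' (.mk (.card l h) content skel)

/-- `s` is true for `P_j` w.r.t. `Ī` (in the whole collection). -/
def SC.TrueFor {α : Type} {n : ℕ} (I : SInterp α n) (j : Fin n) (s : SC α n) : Prop :=
  SC.TrueIn I j Set.univ s

/-- Truth of the body of a social rule of `P_j` w.r.t. a social interpretation. -/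
def SRule.bodyTrue {α : Type} {n : ℕ} (I : SInterp α n) (j : Fin n) (r : SRule α n) : Prop :=
  (∀ b ∈ r.lits, Lit.trueFor I j b) ∧
  (∀ p ∈ r.scs, (p.2 = true → SC.TrueFor I j p.1) ∧ (p.2 = false → ¬ SC.TrueFor I j p.1))

/-- The social immediate consequence operator `ST_C`. -/
def STC {α : Type} {n : ℕ} (C : Fin n → SProgram α n) (I : SInterp α n) : SInterp α n :=
  {x | ∃ r ∈ C x.1, r.isOkay = false ∧ r.head = x.2 ∧ SRule.bodyTrue I x.1 r} ∪
  {x | ∃ r ∈ C x.1, r.isOkay = true ∧ r.head = x.2 ∧ x ∈ I ∧ SRule.bodyTrue I x.1 r}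

/-- The labelled version `(L)_{P_i}` of a set of atoms. -/
def labelled {α : Type} {n : ℕ} (i : Fin n) (L : Set α) : SInterp α n :=
  {x | x.1 = i ∧ x.2 ∈ L}

/-- Candidate social interpretations: combinations of autonomous fixpoints. -/
def Candidate {α : Type} {n : ℕ} (C : Fin n → SProgram α n) (I : SInterp α n) : Prop :=
  ∃ F : Fin n → Set α, (∀ i, F i ∈ AFP (C i)) ∧ I = ⋃ i, labelled i (F i)

/-- The Social Semantics: the set of social models. -/
def SOS {α : Type} {n : ℕ} (C : Fin n → SProgram α n) : Set (SInterp α n) :=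
  {I | Candidate C I ∧ STC C I = I}

/-! ### Traditional (normal) logic programs -/

/-- A normal logic-program rule. -/
structure NRule (γ : Type) where
  head : γ
  body : List (Lit γ)

abbrev NProgram (γ : Type) := Set (NRule γ)

/-- The atoms occurring in a normal program. -/
def NVar {γ : Type} (P : NProgram γ) : Set γ :=
  {a | ∃ r ∈ P, r.head = a ∨ ∃ b ∈ r.body, Lit.atom b = a}

/-- The immediate consequence operator `T_P`. -/
def TN {γ : Type} (P : NProgram γ) (I : Set γ) : Set γ :=
  {a | ∃ r ∈ P, r.head = a ∧ ∀ b ∈ r.body, b.holds I}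

/-- Fixpoints of a traditional program. -/
def NFP {γ : Type} (P : NProgram γ) : Set (Set γ) :=
  {I | I ⊆ NVar P ∧ TN P I = I}

/-- Keep a positive literal, drop a negative one. -/
def Lit.posOnly {γ : Type} : Lit γ → Option (Lit γ)
  | .pos a => some (.pos a)
  | .neg _ => none

/-- The Gelfond–Lifschitz reduct `P^M`. -/
def GLReduct {γ : Type} (P : NProgram γ) (M : Set γ) : NProgram γ :=
  {r | ∃ r' ∈ P, (∀ c : γ, Lit.neg c ∈ r'.body → c ∉ M) ∧
        r = ⟨r'.head, r'.body.filterMap Lit.posOnly⟩}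

/-- The least model of a (positive) program, as the intersection of all sets
closed under its rules. -/
def LeastModel {γ : Type} (P : NProgram γ) : Set γ :=
  ⋂₀ {I | ∀ r ∈ P, (∀ a : γ, Lit.pos a ∈ r.body → a ∈ I) → r.head ∈ I}

/-- Stable models (Gelfond–Lifschitz) of a normal program. -/
def SMN {γ : Type} (P : NProgram γ) : Set (Set γ) :=
  {M | M = LeastModel (GLReduct P M)}

/-! ### The translation vocabulary -/

/-- Atoms of the translated programs: `a_P`, `a'_P`, `sa_P`, `fail_P`, `ρ(s)_P`
and the `g(s)(k)_P` predicates. -/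
inductive GAtom (α : Type) (n : ℕ) where
  | atm (a : α)
  | prim (a : α)
  | sup (a : α)
  | fail
  | rho (s : SC α n)
  | g (s : SC α n) (k : Fin n)

/-- The guessing rules `S_1` over a vocabulary `V`. -/
def GammaS1 {α : Type} {n : ℕ} (V : Set α) : NProgram (GAtom α n) :=
  {r | ∃ a ∈ V, r = ⟨GAtom.atm a, [Lit.neg (GAtom.prim a)]⟩ ∨
                r = ⟨GAtom.prim a, [Lit.neg (GAtom.atm a)]⟩}

/-- The checking rules `S_3` over a vocabulary `V`. -/
def GammaS3 {α : Type} {n : ℕ} (V : Set α) : NProgram (GAtom α n) :=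
  {r | ∃ a ∈ V,
      r = ⟨GAtom.fail, [Lit.neg GAtom.fail, Lit.pos (GAtom.sup a), Lit.neg (GAtom.atm a)]⟩ ∨
      r = ⟨GAtom.fail, [Lit.neg GAtom.fail, Lit.pos (GAtom.atm a), Lit.neg (GAtom.sup a)]⟩}

/-- The transformation `Γ` of Buccafurri–Gottlob, for traditional programs. -/
def Gamma {α : Type} {n : ℕ} (P : NProgram α) : NProgram (GAtom α n) :=
  GammaS1 (NVar P) ∪
  {r | ∃ r' ∈ P, r = ⟨GAtom.sup r'.head, r'.body.map (Lit.map GAtom.atm)⟩} ∪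
  GammaS3 (NVar P)

/-- The translated body of a social rule: labelled literals followed by the
`ρ`-literals corresponding to its (possibly NAF'd) SCs. -/
def SRule.transBody {α : Type} {n : ℕ} (r : SRule α n) : List (Lit (GAtom α n)) :=
  r.lits.map (Lit.map GAtom.atm) ++
    r.scs.map (fun p => if p.2 then Lit.pos (GAtom.rho p.1) else Lit.neg (GAtom.rho p.1))

/-- The extended transformation `Γ'` for SOLP programs. -/
def Gamma' {α : Type} {n : ℕ} (Q : SProgram α n) : NProgram (GAtom α n) :=
  GammaS1 (SVar (AP (hatP Q))) ∪
  {r | ∃ r' ∈ Q, r = ⟨GAtom.sup r'.head, SRule.transBody r'⟩} ∪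
  GammaS3 (SVar (AP (hatP Q)))

/-- Forget the SCs (and okay-marking) of a social rule, yielding a traditional rule. -/
def SRule.toN {α : Type} {n : ℕ} (r : SRule α n) : NRule α := ⟨r.head, r.lits⟩

/-- View an SC-free SOLP program as a traditional program. -/
def toTrad {α : Type} {n : ℕ} (P : SProgram α n) : NProgram α := SRule.toN '' P

/-- The encoding `[M]_P` of an interpretation of a SOLP program `P`. -/
def encode {α : Type} {n : ℕ} (P : SProgram α n) (M : Set α) : Set (GAtom α n) :=
  (GAtom.atm '' M) ∪ (GAtom.prim '' (SVar (AP (hatP P)) \ M)) ∪ (GAtom.sup '' M)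

/-- The encoding `[M]_P` of an interpretation of a traditional program `P`. -/
def encodeN {α : Type} (n : ℕ) (P : NProgram α) (M : Set α) : Set (GAtom α n) :=
  (GAtom.atm '' M) ∪ (GAtom.prim '' (NVar P \ M)) ∪ (GAtom.sup '' M)

/-- Renaming of rules. -/
def NRule.map {γ δ : Type} (f : γ → δ) (r : NRule γ) : NRule δ :=
  ⟨f r.head, r.body.map (Lit.map f)⟩

/-- Labelling of a whole program w.r.t. `P_i`. -/
def labProg {γ : Type} {n : ℕ} (i : Fin n) (P : NProgram γ) : NProgram (Fin n × γ) :=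
  (NRule.map (fun a => (i, a))) '' P

/-! ### Aggregate programs -/

/-- A `#count` aggregate `l ≤ #count{K : atomOf K, cond K} ≤ h`. -/
structure CountAgg (γ : Type) (κ : Type) where
  l : ℕ
  h : ℕ
  atomOf : κ → γ
  cond : κ → Prop

/-- Truth of a count aggregate w.r.t. an interpretation. -/
def CountAgg.holds {γ κ : Type} (M : Set γ) (c : CountAgg γ κ) : Prop :=
  c.l ≤ Set.ncard {K | c.cond K ∧ c.atomOf K ∈ M} ∧
  Set.ncard {K | c.cond K ∧ c.atomOf K ∈ M} ≤ c.h

/-- A rule of a logic program with count aggregates. -/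
structure ARule (γ : Type) (κ : Type) where
  head : γ
  body : List (Lit γ)
  aggs : List (CountAgg γ κ)

abbrev AProgram (γ : Type) (κ : Type) := Set (ARule γ κ)

/-- Truth of the body of an aggregate rule. -/
def ARule.bodyHolds {γ κ : Type} (M : Set γ) (r : ARule γ κ) : Prop :=
  (∀ b ∈ r.body, b.holds M) ∧ (∀ c ∈ r.aggs, c.holds M)

/-- `M` is a (classical) model of an aggregate program. -/
def AModel {γ κ : Type} (P : AProgram γ κ) (M : Set γ) : Prop :=
  ∀ r ∈ P, r.bodyHolds M → r.head ∈ M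

/-- Stable (answer-set) semantics for aggregate programs: `M` is a minimal model
of the reduct consisting of the rules whose bodies are true w.r.t. `M`. -/
def AStable {γ κ : Type} (P : AProgram γ κ) (M : Set γ) : Prop :=
  AModel P M ∧
  ∀ N : Set γ, N ⊆ M → (∀ r ∈ P, r.bodyHolds M → r.bodyHolds N → r.head ∈ N) → N = M

/-- An aggregate-free rule, seen as an aggregate rule. -/
def NRule.toA {γ : Type} (κ : Type) (r : NRule γ) : ARule γ κ := ⟨r.head, r.body, []⟩

def toAProg {γ : Type} (κ : Type) (P : NProgram γ) : AProgram γ κ := NRule.toA κ '' P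

/-! ### The translation `Ψ` of social conditions -/

/-- Membership of a rule in the translation `Ψ^{P_j}(s)` of a social condition. -/
inductive PsiMem {α : Type} {n : ℕ} (j : Fin n) :
    SC α n → ARule (Fin n × GAtom α n) (Fin n) → Prop where
  | memberGuess (k : Fin n) (content : List (Lit α)) (skel : List (SC α n)) :
      PsiMem j (.mk (.member k) content skel)
        ⟨(j, GAtom.g (.mk (.member k) content skel) k),
          content.map (Lit.map fun a => (k, GAtom.atm a)), []⟩
  | memberCheck (k : Fin n) (content : List (Lit α)) (skel : List (SC α n)) :
      PsiMem j (.mk (.member k) content skel)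
        ⟨(j, GAtom.rho (.mk (.member k) content skel)),
          [Lit.pos (j, GAtom.g (.mk (.member k) content skel) k)], []⟩
  | cardGuess (l h : ℕ) (content : List (Lit α)) (skel : List (SC α n))
      (i : Fin n) (hij : i ≠ j) :
      PsiMem j (.mk (.card l h) content skel)
        ⟨(j, GAtom.g (.mk (.card l h) content skel) i),
          content.map (Lit.map fun a => (i, GAtom.atm a)) ++
            skel.map (fun s' => Lit.pos (j, GAtom.rho s')), []⟩
  | cardCheck (l h : ℕ) (content : List (Lit α)) (skel : List (SC α n)) :
      PsiMem j (.mk (.card l h) content skel)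
        ⟨(j, GAtom.rho (.mk (.card l h) content skel)), [],
          [⟨l, h, fun K => (j, GAtom.g (.mk (.card l h) content skel) K),
            fun K => K ≠ j⟩]⟩
  | nested (l h : ℕ) (content : List (Lit α)) (skel : List (SC α n))
      (s' : SC α n) (hs : s' ∈ skel) (r : ARule (Fin n × GAtom α n) (Fin n))
      (hr : PsiMem j s' r) :
      PsiMem j (.mk (.card l h) content skel) r

/-- The translation `Ψ^{P_j}(s)` of a single social condition. -/
def Psi {α : Type} {n : ℕ} (j : Fin n) (s : SC α n) :
    AProgram (Fin n × GAtom α n) (Fin n) :=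
  {r | PsiMem j s r}

/-- The depth-0 social conditions of a SOLP program. -/
def MSC {α : Type} {n : ℕ} (P : SProgram α n) : Set (SC α n) :=
  {s | ∃ r ∈ P, ∃ b : Bool, (s, b) ∈ r.scs}

/-- The SC translation `C(P_1, ..., P_n)` of a whole SOLP collection. -/
def CTrans {α : Type} {n : ℕ} (C : Fin n → SProgram α n) :
    AProgram (Fin n × GAtom α n) (Fin n) :=
  ⋃ j, ⋃ s ∈ MSC (C j), Psi j s

/-- The program of facts `{a ← : a ∈ Ī}` corresponding to a social interpretation. -/
def factProg {α : Type} {n : ℕ} (I : SInterp α n) :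
    AProgram (Fin n × GAtom α n) (Fin n) :=
  {r | ∃ x ∈ I, r = ⟨(x.1, GAtom.atm x.2), [], []⟩}

/-- The set `SAT^{P_j}_{Ī}(s)` of heads of rules of `Ψ^{P_j}(s)` belonging to
some stable model of `C(P_1,...,P_n) ∪ Q`. -/
def SAT {α : Type} {n : ℕ} (C : Fin n → SProgram α n) (I : SInterp α n)
    (j : Fin n) (s : SC α n) : Set (Fin n × GAtom α n) :=
  {x | (∃ r, PsiMem j s r ∧ r.head = x) ∧
       ∃ M, AStable (CTrans C ∪ factProg I) M ∧ x ∈ M}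

/-! ### COLP programs -/

/-- A COLP rule: a classical rule or an okay-rule, with a body of literals. -/
structure CRule (α : Type) where
  head : α
  isOkay : Bool
  lits : List (Lit α)

abbrev CProgram (α : Type) := Set (CRule α)

/-- The hat operator on COLP programs: `okay(p) ← body` becomes `p ← p, body`. -/
def CRule.hatN {α : Type} (r : CRule α) : NRule α :=
  if r.isOkay then ⟨r.head, .pos r.head :: r.lits⟩ else ⟨r.head, r.lits⟩

def hatC {α : Type} (P : CProgram α) : NProgram α := CRule.hatN '' P

/-- The SOLP translation `σ^n` of a COLP rule. -/
def sigmaRule {α : Type} (n : ℕ) (r : CRule α) : SRule α n :=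
  ⟨r.head, r.isOkay, r.lits, [(SC.mk (.card (n - 1) (n - 1)) [Lit.pos r.head] [], true)]⟩

/-- The SOLP translation `σ^n` of a COLP program. -/
def sigmaP {α : Type} (n : ℕ) (P : CProgram α) : SProgram α n := sigmaRule n '' P

/-- The joint fixpoints `JFP(P_1,...,P_n)` of a collection of COLP programs. -/
def JFP {α : Type} {n : ℕ} (P : Fin n → CProgram α) : Set (Set α) :=
  ⋂ i, NFP (hatC (P i))

end SOLP

/-! Neither side depends on the social conditions: both only see the underlying COLP
program (heads, okay-flags and literal bodies). The hat rule `p ← p, body` has the same atoms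
as `okay(p) ← body` and fires exactly when `p` and `body` are true, which is exactly when the
tolerance rule contributes `p` to `AT_P`. -/

namespace SOLP

variable {α : Type} {n : ℕ}

def SRule.toC (r : SRule α n) : CRule α := ⟨r.head, r.isOkay, r.lits⟩

def CVar (Q : CProgram α) : Set α :=
  {a | ∃ r ∈ Q, r.head = a ∨ ∃ b ∈ r.lits, Lit.atom b = a}

def CTP (Q : CProgram α) (I : Set α) : Set α :=
  {a | ∃ r ∈ Q, r.head = a ∧ (r.isOkay = true → a ∈ I) ∧ litsTrue I r.lits}

theorem toTrad_AP (Q : SProgram α n) : toTrad (AP Q) = toTrad Q := by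
  simp only [toTrad, AP, Set.image_image]
  rfl

theorem toTrad_hatP (P : SProgram α n) : toTrad (hatP P) = hatC (SRule.toC '' P) := by
  ext r
  simp only [toTrad, hatP, hatC, Set.image_image, Set.image_union, Set.mem_union,
    Set.mem_image, Set.mem_sep_iff]
  constructor
  · rintro (⟨s, ⟨hs, hok⟩, rfl⟩ | ⟨s, ⟨hs, hok⟩, rfl⟩) <;>
      exact ⟨s, hs, by simp [CRule.hatN, SRule.toC, SRule.toN, hok]⟩
  · rintro ⟨s, hs, rfl⟩
    cases hok : s.isOkay
    exacts [Or.inl ⟨s, ⟨hs, hok⟩, by simp [CRule.hatN, SRule.toC, SRule.toN, hok]⟩,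
      Or.inr ⟨s, ⟨hs, hok⟩, by simp [CRule.hatN, SRule.toC, SRule.toN, hok]⟩]

theorem NVar_hatC (Q : CProgram α) : NVar (hatC Q) = CVar Q := by
  ext a
  simp only [NVar, CVar, hatC, Set.exists_mem_image, Set.mem_ofPred_eq]
  refine exists_congr fun r => and_congr_right fun _ => ?_
  cases h : r.isOkay <;> simp [CRule.hatN, Lit.atom, h]

theorem TN_hatC (Q : CProgram α) (I : Set α) : TN (hatC Q) I = CTP Q I := by
  ext a
  simp only [TN, CTP, hatC, litsTrue, Set.exists_mem_image, Set.mem_ofPred_eq]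
  refine exists_congr fun r => and_congr_right fun _ => ?_
  cases h : r.isOkay <;> simp [CRule.hatN, Lit.holds, h]
  rintro rfl _
  rfl

theorem SVar_AP (P : SProgram α n) : SVar (AP P) = CVar (SRule.toC '' P) := by
  ext a
  simp [SVar, CVar, AP, SRule.toC]

theorem ATP_eq_CTP (P : SProgram α n) (I : Set α) : ATP P I = CTP (SRule.toC '' P) I := by
  ext a
  simp only [ATP, CTP, AP, SRule.toC, Set.exists_mem_image, Set.mem_union, Set.mem_ofPred_eq]
  constructor
  · rintro (⟨r, hr, hok, rfl, hl⟩ | ⟨r, hr, -, rfl, ha, hl⟩)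
    · exact ⟨r, hr, rfl, fun h => absurd (hok ▸ h) Bool.false_ne_true, hl⟩
    · exact ⟨r, hr, rfl, fun _ => ha, hl⟩
  · rintro ⟨r, hr, rfl, ha, hl⟩
    cases hok : r.isOkay
    · exact Or.inl ⟨r, hr, hok, rfl, hl⟩
    · exact Or.inr ⟨r, hr, hok, rfl, ha hok, hl⟩

end SOLP

open SOLP in
/-- `FP(A(P̂)) = AFP(P)`. -/
theorem fp_a_hat_eq_afp {α : Type} {n : ℕ} (P : SProgram α n) :
    NFP (toTrad (AP (hatP P))) = AFP P := by
  ext I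
  simp only [NFP, AFP, Set.mem_ofPred_eq, toTrad_AP, toTrad_hatP, NVar_hatC, TN_hatC, SVar_AP,
    ATP_eq_CTP]
end

section
/- For any SOLP program P, the stable models of the translation of its autonomous version are exactly the encodings of its autonomous fixpoints: SM(Γ'(A(P̂))) = ∪_{F ∈ AFP(P)} {[F]_P}. -/
/-! `A(P̂)` has neither social conditions nor tolerance rules, so `Γ'(A(P̂))` is the
Buccafurri–Gottlob transform `Γ` of the traditional program underlying `A(P̂)`, whose
`T_P`-fixpoints are exactly `AFP(P)`. A stable model `M` of `Γ` is supported, and the `fail`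
constraints force `a_P ∈ M ↔ sa_P ∈ M`; so the guessing rules make `M` the encoding of
`F = {a | a_P ∈ M}`, and support of the `sa_P` says `T_P(F) = F`. Conversely, the encoding of a
fixpoint is a model of `Γ` all of whose atoms are derivable in its reduct. -/

namespace SOLP

section Lit

variable {α β : Type}

theorem pos_mem_filterMap_posOnly {L : List (Lit α)} {a : α} :
    Lit.pos a ∈ L.filterMap Lit.posOnly ↔ Lit.pos a ∈ L := by
  simp only [List.mem_filterMap]
  constructor
  · rintro ⟨(b | b), hb, he⟩ <;> simp only [Lit.posOnly, Option.some.injEq,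
      reduceCtorEq] at he
    exact he ▸ hb
  · exact fun h => ⟨_, h, rfl⟩

theorem Lit.holds_map (f : α → β) (M : Set β) (b : Lit α) :
    (b.map f).holds M ↔ b.holds (f ⁻¹' M) := by
  cases b <;> rfl

theorem forall_holds_map_iff (f : α → β) (M : Set β) (L : List (Lit α)) :
    (∀ b ∈ L.map (Lit.map f), b.holds M) ↔ ∀ b ∈ L, b.holds (f ⁻¹' M) := by
  simp [Lit.holds_map]

theorem pos_mem_map_litMap {f : α → β} {L : List (Lit α)} {x : β} :
    Lit.pos x ∈ L.map (Lit.map f) ↔ ∃ a, Lit.pos a ∈ L ∧ f a = x := by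
  simp only [List.mem_map]
  constructor
  · rintro ⟨(a | a), ha, h⟩ <;> simp only [Lit.map, Lit.pos.injEq, reduceCtorEq] at h
    exact ⟨a, ha, h⟩
  · rintro ⟨a, ha, rfl⟩
    exact ⟨_, ha, rfl⟩

theorem neg_mem_map_litMap {f : α → β} {L : List (Lit α)} {x : β} :
    Lit.neg x ∈ L.map (Lit.map f) ↔ ∃ a, Lit.neg a ∈ L ∧ f a = x := by
  simp only [List.mem_map]
  constructor
  · rintro ⟨(a | a), ha, h⟩ <;> simp only [Lit.map, Lit.neg.injEq, reduceCtorEq] at h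
    exact ⟨a, ha, h⟩
  · rintro ⟨a, ha, rfl⟩
    exact ⟨_, ha, rfl⟩

end Lit

section NormalProgram

variable {γ : Type}

theorem leastModel_subset {P : NProgram γ} {I : Set γ}
    (hI : ∀ r ∈ P, (∀ a, Lit.pos a ∈ r.body → a ∈ I) → r.head ∈ I) : LeastModel P ⊆ I :=
  Set.sInter_subset_of_mem hI

theorem head_mem_leastModel {P : NProgram γ} {r : NRule γ} (hr : r ∈ P)
    (hbody : ∀ a, Lit.pos a ∈ r.body → a ∈ LeastModel P) : r.head ∈ LeastModel P :=
  Set.mem_sInter.2 fun _ hI => hI r hr fun a ha => Set.mem_sInter.1 (hbody a ha) _ hI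

theorem exists_rule_of_mem_leastModel {P : NProgram γ} {x : γ} (hx : x ∈ LeastModel P) :
    ∃ r ∈ P, r.head = x ∧ ∀ a, Lit.pos a ∈ r.body → a ∈ LeastModel P := by
  refine leastModel_subset (I := {x | ∃ r ∈ P, r.head = x ∧
    ∀ a, Lit.pos a ∈ r.body → a ∈ LeastModel P}) ?_ hx
  intro r hr hbody
  refine ⟨r, hr, rfl, fun a ha => ?_⟩
  obtain ⟨r', hr', rfl, hbody'⟩ := hbody a ha
  exact head_mem_leastModel hr' hbody'

theorem TN_subset_NVar (P : NProgram γ) (I : Set γ) : TN P I ⊆ NVar P := by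
  rintro a ⟨r, hr, rfl, -⟩
  exact ⟨r, hr, Or.inl rfl⟩

end NormalProgram

section StableModel

variable {γ : Type} {P : NProgram γ} {M : Set γ}

theorem forall_holds_of_mem_GLReduct {r : NRule γ}
    (hneg : ∀ c, Lit.neg c ∈ r.body → c ∉ M)
    (hpos : ∀ a, Lit.pos a ∈ r.body.filterMap Lit.posOnly → a ∈ M) :
    ∀ b ∈ r.body, b.holds M
  | .pos a, hb => hpos a (pos_mem_filterMap_posOnly.2 hb)
  | .neg c, hb => hneg c hb

theorem head_mem_leastModel_GLReduct {r : NRule γ} (hr : r ∈ P)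
    (hneg : ∀ c, Lit.neg c ∈ r.body → c ∉ M)
    (hpos : ∀ a, Lit.pos a ∈ r.body → a ∈ LeastModel (GLReduct P M)) :
    r.head ∈ LeastModel (GLReduct P M) :=
  head_mem_leastModel (r := ⟨r.head, r.body.filterMap Lit.posOnly⟩) ⟨r, hr, hneg, rfl⟩
    fun a ha => hpos a (pos_mem_filterMap_posOnly.1 ha)

theorem leastModel_GLReduct_subset (hM : ∀ r ∈ P, (∀ b ∈ r.body, b.holds M) → r.head ∈ M) :
    LeastModel (GLReduct P M) ⊆ M := by
  refine leastModel_subset ?_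
  rintro _ ⟨r, hr, hneg, rfl⟩ hpos
  exact hM r hr (forall_holds_of_mem_GLReduct hneg hpos)

theorem head_mem_of_mem_SMN (hM : M ∈ SMN P) {r : NRule γ} (hr : r ∈ P)
    (hbody : ∀ b ∈ r.body, b.holds M) : r.head ∈ M := by
  rw [hM]
  exact head_mem_leastModel_GLReduct hr (fun c hc => hbody _ hc)
    fun a ha => hM ▸ hbody _ ha

theorem exists_rule_of_mem_SMN (hM : M ∈ SMN P) {x : γ} (hx : x ∈ M) :
    ∃ r ∈ P, r.head = x ∧ ∀ b ∈ r.body, b.holds M := by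
  rw [hM] at hx
  obtain ⟨_, ⟨r, hr, hneg, rfl⟩, rfl, hpos⟩ := exists_rule_of_mem_leastModel hx
  exact ⟨r, hr, rfl, forall_holds_of_mem_GLReduct hneg fun a ha => hM ▸ hpos a ha⟩

theorem mem_SMN_of_model (hmodel : ∀ r ∈ P, (∀ b ∈ r.body, b.holds M) → r.head ∈ M)
    (hsub : M ⊆ LeastModel (GLReduct P M)) : M ∈ SMN P :=
  hsub.antisymm (leastModel_GLReduct_subset hmodel)

end StableModel

section Gamma

variable {α : Type} {n : ℕ} {P : NProgram α}

@[simp] theorem atm_mem_encodeN {F : Set α} {a : α} :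
    (GAtom.atm a : GAtom α n) ∈ encodeN n P F ↔ a ∈ F := by
  simp [encodeN]

@[simp] theorem prim_mem_encodeN {F : Set α} {a : α} :
    (GAtom.prim a : GAtom α n) ∈ encodeN n P F ↔ a ∈ NVar P ∧ a ∉ F := by
  simp [encodeN]

@[simp] theorem sup_mem_encodeN {F : Set α} {a : α} :
    (GAtom.sup a : GAtom α n) ∈ encodeN n P F ↔ a ∈ F := by
  simp [encodeN]

theorem preimage_atm_encodeN (F : Set α) : GAtom.atm ⁻¹' encodeN n P F = F := by
  ext a
  exact atm_mem_encodeN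

theorem encodeN_mem_SMN_Gamma {F : Set α} (hF : F ∈ NFP P) :
    encodeN n P F ∈ SMN (Gamma P) := by
  obtain ⟨hFV, hTF⟩ := hF
  set M := encodeN n P F
  refine mem_SMN_of_model ?_ ?_
  · rintro r ((⟨a, ha, rfl | rfl⟩ | ⟨r, hr, rfl⟩) | ⟨a, ha, rfl | rfl⟩) hbody
    · simpa [M, Lit.holds, ha] using hbody
    · simpa [M, Lit.holds, ha] using hbody
    · rw [forall_holds_map_iff, preimage_atm_encodeN] at hbody
      exact sup_mem_encodeN.2 (hTF ▸ ⟨r, hr, rfl, hbody⟩)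
    · simp_all [M, Lit.holds]
    · simp_all [M, Lit.holds]
  · have hatm : ∀ a ∈ F, GAtom.atm a ∈ LeastModel (GLReduct (Gamma P) M) := fun a ha =>
      head_mem_leastModel_GLReduct (r := ⟨GAtom.atm a, [Lit.neg (GAtom.prim a)]⟩)
        (Or.inl (Or.inl ⟨a, hFV ha, Or.inl rfl⟩)) (by simp [M, ha]) (by simp)
    rintro x ((⟨a, ha, rfl⟩ | ⟨a, ⟨haV, haF⟩, rfl⟩) | ⟨a, ha, rfl⟩)
    · exact hatm a ha
    · exact head_mem_leastModel_GLReduct (r := ⟨GAtom.prim a, [Lit.neg (GAtom.atm a)]⟩)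
        (Or.inl (Or.inl ⟨a, haV, Or.inr rfl⟩)) (by simp [M, haF]) (by simp)
    · rw [← hTF] at ha
      obtain ⟨r, hr, rfl, hbody⟩ := ha
      refine head_mem_leastModel_GLReduct
        (r := ⟨GAtom.sup r.head, r.body.map (Lit.map GAtom.atm)⟩)
        (Or.inl (Or.inr ⟨r, hr, rfl⟩)) ?_ ?_
      · rintro _ hc
        obtain ⟨b, hb, rfl⟩ := neg_mem_map_litMap.1 hc
        exact atm_mem_encodeN.not.2 (hbody _ hb)
      · rintro _ hc
        obtain ⟨b, hb, rfl⟩ := pos_mem_map_litMap.1 hc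
        exact hatm b (hbody _ hb)

theorem eq_atm_or_prim_or_sup_of_mem_SMN_Gamma {M : Set (GAtom α n)} (hM : M ∈ SMN (Gamma P))
    {x : GAtom α n} (hx : x ∈ M) :
    (∃ a ∈ NVar P, x = GAtom.atm a ∧ GAtom.prim a ∉ M) ∨
    (∃ a ∈ NVar P, x = GAtom.prim a ∧ GAtom.atm a ∉ M) ∨
    (∃ a ∈ TN P (GAtom.atm ⁻¹' M), x = GAtom.sup a) := by
  obtain ⟨r, hr, rfl, hbody⟩ := exists_rule_of_mem_SMN hM hx
  rcases hr with ((⟨a, ha, rfl | rfl⟩ | ⟨r, hr, rfl⟩) | ⟨a, ha, rfl | rfl⟩)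
  · exact Or.inl ⟨a, ha, rfl, hbody _ List.mem_cons_self⟩
  · exact Or.inr (Or.inl ⟨a, ha, rfl, hbody _ List.mem_cons_self⟩)
  · exact Or.inr (Or.inr ⟨r.head, ⟨r, hr, rfl, (forall_holds_map_iff _ _ _).1 hbody⟩, rfl⟩)
  · exact absurd hx (hbody _ List.mem_cons_self)
  · exact absurd hx (hbody _ List.mem_cons_self)

theorem mem_NFP_and_eq_encodeN_of_mem_SMN_Gamma {M : Set (GAtom α n)}
    (hM : M ∈ SMN (Gamma P)) :
    GAtom.atm ⁻¹' M ∈ NFP P ∧ M = encodeN n P (GAtom.atm ⁻¹' M) := by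
  set F := GAtom.atm ⁻¹' M
  have hcases := fun x => eq_atm_or_prim_or_sup_of_mem_SMN_Gamma (x := x) hM
  have hsup : ∀ a, GAtom.sup a ∈ M ↔ a ∈ TN P F := by
    refine fun a => ⟨fun ha => ?_, fun ⟨r, hr, hra, hbody⟩ => ?_⟩
    · rcases hcases _ ha with ⟨b, -, hab, -⟩ | ⟨b, -, hab, -⟩ | ⟨b, hb, hab⟩
      · simp at hab
      · simp at hab
      · exact GAtom.sup.inj hab ▸ hb
    · exact hra ▸ head_mem_of_mem_SMN hM (Or.inl (Or.inr ⟨r, hr, rfl⟩))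
        ((forall_holds_map_iff _ _ _).2 hbody)
  have hfail : GAtom.fail ∉ M := fun h => by
    rcases hcases _ h with ⟨b, -, hb, -⟩ | ⟨b, -, hb, -⟩ | ⟨b, -, hb⟩ <;> simp at hb
  have hatm : ∀ a, GAtom.atm a ∈ M ↔ GAtom.sup a ∈ M := by
    refine fun a => ⟨fun ha => ?_, fun hs => ?_⟩
    · have haV : a ∈ NVar P := by
        rcases hcases _ ha with ⟨b, hb, hab, -⟩ | ⟨b, -, hab, -⟩ | ⟨b, -, hab⟩
        · exact GAtom.atm.inj hab ▸ hb
        all_goals simp at hab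
      by_contra hs
      exact hfail (head_mem_of_mem_SMN hM (Or.inr ⟨a, haV, Or.inr rfl⟩)
        (by simp [Lit.holds, hfail, ha, hs]))
    · have haV := TN_subset_NVar P F ((hsup a).1 hs)
      by_contra ha
      exact hfail (head_mem_of_mem_SMN hM (Or.inr ⟨a, haV, Or.inl rfl⟩)
        (by simp [Lit.holds, hfail, ha, hs]))
  have hfix : TN P F = F := Set.ext fun a => ((hsup a).symm.trans (hatm a).symm)
  refine ⟨⟨hfix ▸ TN_subset_NVar P F, hfix⟩, ?_⟩
  ext x
  cases x with
  | atm a => rw [atm_mem_encodeN]; rfl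
  | sup a => rw [sup_mem_encodeN, ← hatm]; rfl
  | prim a =>
    rw [prim_mem_encodeN]
    refine ⟨fun ha => ?_, fun ⟨haV, haF⟩ => head_mem_of_mem_SMN hM
      (Or.inl (Or.inl ⟨a, haV, Or.inr rfl⟩))
      (by simp only [List.mem_singleton, forall_eq]; exact haF)⟩
    rcases hcases _ ha with ⟨b, -, hab, -⟩ | ⟨b, hb, hab, hbM⟩ | ⟨b, -, hab⟩
    · simp at hab
    · exact GAtom.prim.inj hab ▸ ⟨hb, hbM⟩
    · simp at hab
  | _ =>
    refine iff_of_false (fun h => ?_) (by simp [encodeN])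
    rcases hcases _ h with ⟨b, -, hab, -⟩ | ⟨b, -, hab, -⟩ | ⟨b, -, hab⟩ <;> simp at hab

theorem SMN_Gamma (P : NProgram α) :
    SMN (Gamma P : NProgram (GAtom α n)) = ⋃ F ∈ NFP P, {encodeN n P F} := by
  ext M
  simp only [Set.mem_iUnion, Set.mem_singleton_iff, exists_prop]
  refine ⟨fun hM => ⟨_, mem_NFP_and_eq_encodeN_of_mem_SMN_Gamma hM⟩, ?_⟩
  rintro ⟨F, hF, rfl⟩
  exact encodeN_mem_SMN_Gamma hF

end Gamma

section Autonomous

variable {α : Type} {n : ℕ}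

theorem hatP_eq_self {Q : SProgram α n} (h : ∀ r ∈ Q, r.isOkay = false) : hatP Q = Q := by
  ext r
  constructor
  · rintro (⟨hr, -⟩ | ⟨r', ⟨hr', hok⟩, rfl⟩)
    · exact hr
    · exact absurd (h r' hr') (by simp [hok])
  · exact fun hr => Or.inl ⟨hr, h r hr⟩

theorem AP_eq_self {Q : SProgram α n} (h : ∀ r ∈ Q, r.scs = []) : AP Q = Q := by
  conv_rhs => rw [← Set.image_id Q]
  exact Set.image_congr fun r hr => by rw [← h r hr]; rfl

theorem NVar_toTrad {Q : SProgram α n} (h : ∀ r ∈ Q, r.scs = []) :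
    NVar (toTrad Q) = SVar Q := by
  ext a
  simp only [NVar, SVar, toTrad, Set.mem_ofPred_eq, Set.exists_mem_image, SRule.toN]
  exact exists_congr fun r => and_congr_right fun hr => by simp [h r hr]

theorem Gamma'_eq_Gamma_toTrad {Q : SProgram α n} (hok : ∀ r ∈ Q, r.isOkay = false)
    (hscs : ∀ r ∈ Q, r.scs = []) : Gamma' Q = Gamma (toTrad Q) := by
  unfold Gamma' Gamma
  rw [hatP_eq_self hok, AP_eq_self hscs, NVar_toTrad hscs]
  congr 2
  ext r
  simp only [toTrad, Set.mem_ofPred_eq, Set.exists_mem_image, SRule.toN, SRule.transBody]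
  exact exists_congr fun r' => and_congr_right fun hr' => by simp [hscs r' hr']

theorem toTrad_AP_hatP (P : SProgram α n) :
    toTrad (AP (hatP P)) =
      (fun r => ⟨r.head, if r.isOkay then .pos r.head :: r.lits else r.lits⟩) '' P := by
  ext r
  constructor
  · rintro ⟨_, ⟨s, (⟨hs, hok⟩ | ⟨s, ⟨hs, hok⟩, rfl⟩), rfl⟩, rfl⟩
    · exact ⟨s, hs, by simp [SRule.toN, hok]⟩
    · exact ⟨s, hs, by simp [SRule.toN, hok]⟩
  · rintro ⟨s, hs, rfl⟩
    cases hok : s.isOkay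
    · exact ⟨_, ⟨s, Or.inl ⟨hs, hok⟩, rfl⟩, by simp [SRule.toN, hok]⟩
    · exact ⟨_, ⟨_, Or.inr ⟨s, ⟨hs, hok⟩, rfl⟩, rfl⟩, by simp [SRule.toN, hok]⟩

theorem NVar_toTrad_AP_hatP (P : SProgram α n) : NVar (toTrad (AP (hatP P))) = SVar (AP P) := by
  ext a
  rw [toTrad_AP_hatP]
  simp only [NVar, SVar, AP, Set.mem_ofPred_eq, Set.exists_mem_image]
  refine exists_congr fun r => and_congr_right fun _ => ?_
  split_ifs <;> simp [Lit.atom]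

theorem TN_toTrad_AP_hatP (P : SProgram α n) (I : Set α) :
    TN (toTrad (AP (hatP P))) I = ATP P I := by
  ext a
  rw [toTrad_AP_hatP]
  simp only [TN, ATP, AP, litsTrue, Set.mem_union, Set.mem_ofPred_eq,
    Set.exists_mem_image, ← exists_or, ← and_or_left]
  refine exists_congr fun r => and_congr_right fun _ => ?_
  cases r.isOkay <;> simp +contextual [Lit.holds]

theorem NFP_toTrad_AP_hatP (P : SProgram α n) : NFP (toTrad (AP (hatP P))) = AFP P := by
  simp only [NFP, AFP, NVar_toTrad_AP_hatP, TN_toTrad_AP_hatP]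

theorem scs_eq_nil_of_mem_AP {Q : SProgram α n} {r : SRule α n} (hr : r ∈ AP Q) :
    r.scs = [] := by
  obtain ⟨s, -, rfl⟩ := hr
  rfl

theorem isOkay_eq_false_of_mem_AP_hatP {Q : SProgram α n} {r : SRule α n}
    (hr : r ∈ AP (hatP Q)) : r.isOkay = false := by
  obtain ⟨s, ⟨-, hs⟩ | ⟨t, -, rfl⟩, rfl⟩ := hr
  · exact hs
  · rfl

end Autonomous

end SOLP

open SOLP in
/-- `SM(Γ'(A(P̂))) = ∪_{F ∈ AFP(P)} {[F]_P}`. -/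
theorem sm_gamma'_a_hat_eq_afp_encodings {α : Type} {n : ℕ} (P : SProgram α n) :
    SMN (Gamma' (AP (hatP P))) = ⋃ F ∈ AFP P, {encode P F} := by
  have hscs : ∀ r ∈ AP (hatP P), r.scs = [] := fun _ => scs_eq_nil_of_mem_AP
  have hencode : ∀ F, encode P F = encodeN n (toTrad (AP (hatP P))) F := fun F => by
    rw [encode, encodeN, NVar_toTrad hscs]
  rw [Gamma'_eq_Gamma_toTrad (fun _ => isOkay_eq_false_of_mem_AP_hatP) hscs, SMN_Gamma,
    NFP_toTrad_AP_hatP]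
  simp_rw [hencode]
end

section
/- For any COLP program P and every integer n ≥ 1, FP(P̂) = AFP(σ^n(P)): the classical fixpoints of the traditional program obtained from P by rewriting okay-rules coincide with the autonomous fixpoints of the SOLP translation σ^n(P), independently of n. -/
/-! The autonomous reduction erases the social condition `[n-1,n-1]head(r)` that `σ^n` adds,
so `AT_{σ^n(P)}` and `T_{P̂}` fire the same heads under the same conditions: the extra
requirement `a ∈ I` of a tolerance rule is exactly the extra body atom `p` of `p ← p, body`. -/

namespace SOLP

variable {α : Type}

section Autonomous

variable {n : ℕ} (Q : SProgram α n)

theorem mem_SVar_AP {a : α} :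
    a ∈ SVar (AP Q) ↔ ∃ r ∈ Q, r.head = a ∨ ∃ b ∈ r.lits, b.atom = a := by
  simp [SVar, AP]

theorem mem_ATP {I : Set α} {a : α} :
    a ∈ ATP Q I ↔ ∃ r ∈ Q, r.head = a ∧ (r.isOkay = true → a ∈ I) ∧ litsTrue I r.lits := by
  simp only [ATP, AP, Set.mem_union, Set.mem_ofPred_eq, Set.exists_mem_image]
  constructor
  · rintro (⟨r, hr, hok, rfl, hL⟩ | ⟨r, hr, -, rfl, ha, hL⟩)
    · exact ⟨r, hr, rfl, fun h => by simp [hok] at h, hL⟩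
    · exact ⟨r, hr, rfl, fun _ => ha, hL⟩
  · rintro ⟨r, hr, rfl, ha, hL⟩
    cases hok : r.isOkay
    · exact Or.inl ⟨r, hr, hok, rfl, hL⟩
    · exact Or.inr ⟨r, hr, hok, rfl, ha hok, hL⟩

end Autonomous

section Hat

variable (P : CProgram α)

theorem CRule.hatN_head (c : CRule α) : c.hatN.head = c.head := by
  unfold CRule.hatN; split <;> rfl

theorem CRule.hatN_body (c : CRule α) :
    c.hatN.body = if c.isOkay then .pos c.head :: c.lits else c.lits := by
  unfold CRule.hatN; split <;> rfl

theorem mem_NVar_hatC {a : α} :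
    a ∈ NVar (hatC P) ↔ ∃ c ∈ P, c.head = a ∨ ∃ b ∈ c.lits, b.atom = a := by
  simp only [NVar, hatC, Set.mem_ofPred_eq, Set.exists_mem_image, CRule.hatN_head,
    CRule.hatN_body]
  refine exists_congr fun c => and_congr_right fun _ => ?_
  split <;> simp [Lit.atom]

theorem mem_TN_hatC {I : Set α} {a : α} :
    a ∈ TN (hatC P) I ↔
      ∃ c ∈ P, c.head = a ∧ (c.isOkay = true → a ∈ I) ∧ litsTrue I c.lits := by
  simp only [TN, hatC, Set.mem_ofPred_eq, Set.exists_mem_image, CRule.hatN_head,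
    CRule.hatN_body]
  refine exists_congr fun c => and_congr_right fun _ => ?_
  split <;> simp_all [litsTrue, Lit.holds]

end Hat

end SOLP

open SOLP in
theorem fp_hat_eq_afp_sigma_general {α : Type} (P : CProgram α) (n : ℕ) :
    NFP (hatC P) = AFP (sigmaP n P) := by
  have hVar : SVar (AP (sigmaP n P)) = NVar (hatC P) := by
    ext a
    rw [mem_SVar_AP, mem_NVar_hatC, sigmaP, Set.exists_mem_image]
    rfl
  have hT : ∀ I, ATP (sigmaP n P) I = TN (hatC P) I := fun I => by
    ext a
    rw [mem_ATP, mem_TN_hatC, sigmaP, Set.exists_mem_image]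
    rfl
  ext I
  simp only [NFP, AFP, Set.mem_ofPred_eq, hVar, hT]

open SOLP in
/-- for every COLP program `P` and every `n ≥ 1`, `FP(P̂) = AFP(σ^n(P))`. -/
theorem fp_hat_eq_afp_sigma {α : Type} (P : CProgram α) (n : ℕ) (hn : 1 ≤ n) :
    NFP (hatC P) = AFP (sigmaP n P) :=
  fp_hat_eq_afp_sigma_general P n
end

section
/- Correctness of the reduction used to prove NP-hardness of social model existence: for COLP programs P_1,...,P_n (n ≥ 1), JFP(P_1,...,P_n) ≠ ∅ if and only if SOS(σ^n(P_1),...,σ^n(P_n)) ≠ ∅. -/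
/-!
The translation σⁿ only attaches the social condition `[n−1,n−1] head` to every rule, so the
autonomous fixpoints of `σⁿ(P)` are exactly the fixpoints of `P̂`. On the candidate built from
fixpoints `F_1, …, F_n`, `ST_C` derives `a` for `P_j` iff `T_{P̂_j}` derives `a` from `F_j` and
`a ∈ F_p` for every other `p`. Hence a joint fixpoint `M` yields the social model with all
components equal to `M`; conversely, in a social model every atom of `F_j` lies in every `F_p`,
so all components coincide and form a joint fixpoint.
-/

namespace SOLP

variable {α : Type} {n : ℕ}

lemma mem_TN_hatC_iff {Q : CProgram α} {M : Set α} {a : α} :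
    a ∈ TN (hatC Q) M ↔
      ∃ r ∈ Q, r.head = a ∧ (r.isOkay = true → a ∈ M) ∧ ∀ b ∈ r.lits, b.holds M := by
  simp only [TN, hatC, Set.mem_ofPred_eq, Set.exists_mem_image]
  refine exists_congr fun r => and_congr_right fun _ => ?_
  cases h : r.isOkay
  · simp [CRule.hatN, h]
  · simp only [CRule.hatN, h, if_true, List.forall_mem_cons, Lit.holds, forall_const]
    constructor <;> rintro ⟨rfl, hM, hlits⟩ <;> exact ⟨rfl, hM, hlits⟩

lemma mem_ATP_iff {P : SProgram α n} {I : Set α} {a : α} :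
    a ∈ ATP P I ↔ ∃ r ∈ P, r.head = a ∧ (r.isOkay = true → a ∈ I) ∧ litsTrue I r.lits := by
  simp only [ATP, AP, Set.mem_union, Set.mem_ofPred_eq, Set.exists_mem_image, ← exists_or,
    ← and_or_left]
  refine exists_congr fun r => and_congr_right fun _ => ?_
  cases r.isOkay <;> simp

lemma mem_NVar_hatC_iff {Q : CProgram α} {a : α} :
    a ∈ NVar (hatC Q) ↔ ∃ r ∈ Q, r.head = a ∨ ∃ b ∈ r.lits, b.atom = a := by
  simp only [NVar, hatC, Set.mem_ofPred_eq, Set.exists_mem_image]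
  refine exists_congr fun r => and_congr_right fun _ => ?_
  cases h : r.isOkay <;> simp [CRule.hatN, h, Lit.atom]

lemma mem_SVar_AP_iff {P : SProgram α n} {a : α} :
    a ∈ SVar (AP P) ↔ ∃ r ∈ P, r.head = a ∨ ∃ b ∈ r.lits, b.atom = a := by
  simp [SVar, AP]

lemma mem_STC_iff {C : Fin n → SProgram α n} {I : SInterp α n} {x : Fin n × α} :
    x ∈ STC C I ↔ ∃ r ∈ C x.1, r.head = x.2 ∧ (r.isOkay = true → x ∈ I) ∧ r.bodyTrue I x.1 := by
  simp only [STC, Set.mem_union, Set.mem_ofPred_eq, ← exists_or, ← and_or_left]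
  refine exists_congr fun r => and_congr_right fun _ => ?_
  cases r.isOkay <;> simp

lemma afp_sigmaP (Q : CProgram α) : AFP (sigmaP n Q) = NFP (hatC Q) := by
  ext M
  have hvar : SVar (AP (sigmaP n Q)) = NVar (hatC Q) := by
    ext a
    simp only [mem_SVar_AP_iff, mem_NVar_hatC_iff, sigmaP, Set.exists_mem_image]
    rfl
  have hop : ATP (sigmaP n Q) M = TN (hatC Q) M := by
    ext a
    simp only [mem_ATP_iff, mem_TN_hatC_iff, sigmaP, Set.exists_mem_image]
    rfl
  rw [AFP, NFP, Set.mem_ofPred_eq, Set.mem_ofPred_eq, hvar, hop]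

lemma SC.trueFor_card_others_iff (I : SInterp α n) (j : Fin n) (content : List (Lit α)) :
    SC.TrueFor I j (.mk (.card (n - 1) (n - 1)) content []) ↔
      ∀ p, p ≠ j → ∀ b ∈ content, Lit.trueFor I p b := by
  have hcard : (Finset.univ.erase j).card = n - 1 := by
    simp [Finset.card_erase_of_mem]
  constructor
  · rintro (_ | ⟨D, hD, hl, -, hc, -, -, -⟩)
    have hDsub : D ⊆ Finset.univ.erase j := fun p hp => by simpa using (hD p hp).2
    have hDeq : D = Finset.univ.erase j := Finset.eq_of_subset_of_card_le hDsub (by omega)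
    intro p hp b hb
    exact hc b hb p (by simpa [hDeq] using hp)
  · intro h
    refine .card (Finset.univ.erase j) (fun p hp => ⟨trivial, (Finset.mem_erase.1 hp).1⟩)
      hcard.ge hcard.le (fun b hb p hp => h p (Finset.mem_erase.1 hp).1 b hb)
      (fun _ _ => ∅) (fun _ hs => absurd hs List.not_mem_nil)
      (fun _ hs => absurd hs List.not_mem_nil)

lemma bodyTrue_sigmaRule_iff (I : SInterp α n) (j : Fin n) (r : CRule α) :
    (sigmaRule n r).bodyTrue I j ↔
      (∀ b ∈ r.lits, Lit.trueFor I j b) ∧ ∀ p, p ≠ j → (p, r.head) ∈ I := by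
  simp [SRule.bodyTrue, sigmaRule, SC.trueFor_card_others_iff, Lit.trueFor]

lemma mem_iUnion_labelled {F : Fin n → Set α} {j : Fin n} {a : α} :
    (j, a) ∈ ⋃ i, labelled i (F i) ↔ a ∈ F j := by
  simp [labelled]

lemma Lit.trueFor_iUnion_labelled {F : Fin n → Set α} {j : Fin n} (b : Lit α) :
    Lit.trueFor (⋃ i, labelled i (F i)) j b ↔ b.holds (F j) := by
  cases b <;> simp only [Lit.trueFor, Lit.holds, mem_iUnion_labelled]

lemma mem_STC_sigmaP_iUnion_labelled_iff {P : Fin n → CProgram α} {F : Fin n → Set α}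
    {j : Fin n} {a : α} :
    (j, a) ∈ STC (fun i => sigmaP n (P i)) (⋃ i, labelled i (F i)) ↔
      a ∈ TN (hatC (P j)) (F j) ∧ ∀ p, p ≠ j → a ∈ F p := by
  simp only [mem_STC_iff, mem_TN_hatC_iff, sigmaP, Set.exists_mem_image, bodyTrue_sigmaRule_iff,
    mem_iUnion_labelled, Lit.trueFor_iUnion_labelled]
  constructor
  · rintro ⟨r, hr, rfl, hok, hlits, hothers⟩
    exact ⟨⟨r, hr, rfl, hok, hlits⟩, hothers⟩
  · rintro ⟨⟨r, hr, rfl, hok, hlits⟩, hothers⟩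
    exact ⟨r, hr, rfl, hok, hlits, hothers⟩

end SOLP

open SOLP in
theorem jfp_nonempty_iff_sos_nonempty_general {α : Type} (n : ℕ)
    (P : Fin n → CProgram α) :
    (JFP P).Nonempty ↔ (SOS (fun i => sigmaP n (P i))).Nonempty := by
  constructor
  · rintro ⟨M, hM⟩
    rw [JFP, Set.mem_iInter] at hM
    refine ⟨⋃ i, labelled i M, ⟨fun _ => M, fun i => afp_sigmaP (P i) ▸ hM i, rfl⟩, ?_⟩
    ext ⟨j, a⟩
    rw [mem_STC_sigmaP_iUnion_labelled_iff, mem_iUnion_labelled, (hM j).2]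
    exact and_iff_left_of_imp fun ha _ _ => ha
  · rintro ⟨_, ⟨F, hF, rfl⟩, hfix⟩
    have hshared : ∀ j p, F j ⊆ F p := by
      intro j p a ha
      rcases eq_or_ne p j with rfl | hpj
      · exact ha
      rw [← mem_iUnion_labelled (F := F), ← hfix, mem_STC_sigmaP_iUnion_labelled_iff] at ha
      exact ha.2 p hpj
    have hconst : ∀ i, ⋂ j, F j = F i := fun i =>
      (Set.iInter_subset F i).antisymm (Set.subset_iInter (hshared i))
    exact ⟨⋂ j, F j, Set.mem_iInter.2 fun i => hconst i ▸ afp_sigmaP (P i) ▸ hF i⟩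

open SOLP in
/-- `JFP(P_1,...,P_n) ≠ ∅` iff `SOS(σ^n(P_1),...,σ^n(P_n)) ≠ ∅`. -/
theorem jfp_nonempty_iff_sos_nonempty {α : Type} (n : ℕ) (hn : 1 ≤ n)
    (P : Fin n → CProgram α) :
    (JFP P).Nonempty ↔ (SOS (fun i => sigmaP n (P i))).Nonempty :=
  jfp_nonempty_iff_sos_nonempty_general n P
end
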